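/- arXiv:2209.09770 — 3 statements merged into one kernel-verified Lean document; each statement's English description precedes it below -/
import Mathlib

section
/- Let M₁ = ξ + η where ξ ∼ B(n,p) and η ∼ Poisson(λ) are independent, and let μ_k = P(M₁ = k). Then for every k ≥ 0 the recursion (np + λq − pk)·μ_k + λp·μ_{k−1} − (k+1)·q·μ_{k+1} = 0 holds, where q = 1−p and μ_{−1} := 0. -/
open scoped BigOperators

/-- The pmf of the binomial distribution `B(n,p)`. -/
noncomputable def binPMF (n : ℕ) (p : ℝ) (k : ℕ) : ℝ :=
  (n.choose k : ℝ) * p ^ k * (1 - p) ^ (n - k)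

/-- The pmf of the Poisson distribution with mean `λ`. -/
noncomputable def poisPMF (lam : ℝ) (k : ℕ) : ℝ :=
  Real.exp (-lam) * lam ^ k / (k.factorial : ℝ)

/-- The pmf of `M₁ = ξ + η`, the independent sum of `B(n,p)` and `Poisson(λ)`. -/
noncomputable def binPoisPMF (n : ℕ) (p lam : ℝ) (k : ℕ) : ℝ :=
  ∑ i ∈ Finset.range (k + 1), binPMF n p i * poisPMF lam (k - i)

/-!
The generating functions `A = ∑ bₖ zᵏ = (q + pz)ⁿ` of `B(n,p)` and `P = ∑ πₖ zᵏ = e^{λ(z-1)}` of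
`Poisson(λ)` satisfy `(q + pz) A' = np A` and `P' = λ P`; at the level of coefficients these are the
two-term recursions of `bₖ` and `πₖ`. By the Leibniz rule the product `G = AP`, whose coefficients
are the `μₖ`, satisfies `(q + pz) G' = (np + λ(q + pz)) G`, and comparing the coefficients of `zᵏ`
gives the recursion.
-/

open PowerSeries

theorem Derivation.mul_apply_mul_eq_of_eq {R A : Type*} [CommSemiring R] [CommRing A]
    [Algebra R A] (D : Derivation R A A) {l a b : A} (c μ : A)
    (ha : l * D a = c * a) (hb : D b = μ * b) :
    l * D (a * b) = c * (a * b) + μ * (l * (a * b)) := by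
  rw [D.leibniz, smul_eq_mul, smul_eq_mul, hb]
  linear_combination b * ha

section LinearFactor

variable {R : Type*} [CommSemiring R] (q p : R) (f : R⟦X⟧)

theorem PowerSeries.coeff_zero_C_add_C_mul_X_mul :
    coeff 0 ((C q + C p * X) * f) = q * coeff 0 f := by
  simp

theorem PowerSeries.coeff_succ_C_add_C_mul_X_mul (k : ℕ) :
    coeff (k + 1) ((C q + C p * X) * f) = q * coeff (k + 1) f + p * coeff k f := by
  rw [add_mul, map_add, mul_assoc, coeff_C_mul, coeff_C_mul, coeff_succ_X_mul]

end LinearFactor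

theorem binPMF_succ (n : ℕ) (p : ℝ) (i : ℕ) :
    ((i : ℝ) + 1) * (1 - p) * binPMF n p (i + 1) = ((n : ℝ) - i) * p * binPMF n p i := by
  rcases lt_or_ge i n with hin | hni
  · have hchoose : (n.choose (i + 1) : ℝ) * (i + 1) = n.choose i * ((n : ℝ) - i) := by
      have := congrArg (Nat.cast : ℕ → ℝ) (Nat.choose_succ_right_eq n i)
      push_cast [Nat.cast_sub hin.le] at this
      exact this
    obtain ⟨m, hm⟩ : ∃ m, n - i = m + 1 := ⟨n - (i + 1), by omega⟩
    rw [binPMF, binPMF, hm, show n - (i + 1) = m by omega]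
    linear_combination p ^ (i + 1) * (1 - p) ^ (m + 1) * hchoose
  · rcases hni.eq_or_lt with rfl | hni
    · simp [binPMF]
    · simp [binPMF, Nat.choose_eq_zero_of_lt hni,
        Nat.choose_eq_zero_of_lt (hni.trans i.lt_succ_self)]

theorem poisPMF_succ (lam : ℝ) (j : ℕ) :
    ((j : ℝ) + 1) * poisPMF lam (j + 1) = lam * poisPMF lam j := by
  rw [poisPMF, poisPMF, Nat.factorial_succ, pow_succ]
  push_cast
  field_simp

noncomputable def binPGF (n : ℕ) (p : ℝ) : ℝ⟦X⟧ := mk (binPMF n p)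

noncomputable def poisPGF (lam : ℝ) : ℝ⟦X⟧ := mk (poisPMF lam)

theorem coeff_binPGF_mul_poisPGF (n : ℕ) (p lam : ℝ) (k : ℕ) :
    coeff k (binPGF n p * poisPGF lam) = binPoisPMF n p lam k := by
  rw [coeff_mul, Finset.Nat.sum_antidiagonal_eq_sum_range_succ_mk]
  simp [binPGF, poisPGF, binPoisPMF]

theorem mul_derivative_binPGF (n : ℕ) (p : ℝ) :
    (C (1 - p) + C p * X) * d⁄dX ℝ (binPGF n p) = C (n * p) * binPGF n p := by
  ext k
  rcases k with _ | k
  · rw [coeff_zero_C_add_C_mul_X_mul, coeff_C_mul, coeff_derivative]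
    simpa [binPGF] using binPMF_succ n p 0
  · rw [coeff_succ_C_add_C_mul_X_mul, coeff_C_mul, coeff_derivative, coeff_derivative]
    simp only [binPGF, coeff_mk]
    have hrec := binPMF_succ n p (k + 1)
    push_cast at hrec ⊢
    linear_combination hrec

theorem derivative_poisPGF (lam : ℝ) : d⁄dX ℝ (poisPGF lam) = C lam * poisPGF lam := by
  ext k
  rw [coeff_derivative, coeff_C_mul]
  simp only [poisPGF, coeff_mk]
  linear_combination poisPMF_succ lam k

theorem stmt_3_general (n : ℕ) (p lam : ℝ) :
    ∀ k : ℕ,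
      ((n : ℝ) * p + lam * (1 - p) - p * (k : ℝ)) * binPoisPMF n p lam k +
        lam * p * (if k = 0 then 0 else binPoisPMF n p lam (k - 1)) -
        ((k : ℝ) + 1) * (1 - p) * binPoisPMF n p lam (k + 1) = 0 := by
  intro k
  have hode := congrArg (coeff k) <| (d⁄dX ℝ).mul_apply_mul_eq_of_eq _ _
    (mul_derivative_binPGF n p) (derivative_poisPGF lam)
  rcases k with _ | k
  · simp only [coeff_zero_C_add_C_mul_X_mul, map_add, coeff_C_mul, coeff_derivative,
      coeff_binPGF_mul_poisPGF] at hode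
    rw [if_pos rfl]
    push_cast at hode ⊢
    linear_combination -hode
  · simp only [coeff_succ_C_add_C_mul_X_mul, map_add, coeff_C_mul, coeff_derivative,
      coeff_binPGF_mul_poisPGF] at hode
    rw [if_neg k.succ_ne_zero, Nat.add_sub_cancel]
    push_cast at hode ⊢
    linear_combination -hode

/-- Panjer-type recursion for the convolution `M₁ = B(n,p) ∗ Poisson(λ)`:
`(np + λq − pk) μ_k + λp μ_{k−1} − (k+1) q μ_{k+1} = 0`, with `μ_{−1} := 0`. -/
theorem stmt_3 (n : ℕ) (p lam : ℝ) (hp0 : 0 < p) (hp1 : p < 1) (hlam : 0 < lam) :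
    ∀ k : ℕ,
      ((n : ℝ) * p + lam * (1 - p) - p * (k : ℝ)) * binPoisPMF n p lam k +
        lam * p * (if k = 0 then 0 else binPoisPMF n p lam (k - 1)) -
        ((k : ℝ) + 1) * (1 - p) * binPoisPMF n p lam (k + 1) = 0 :=
  stmt_3_general n p lam
end

section
/- Let M₁ = ξ + η where ξ ∼ B(n,p) and η ∼ Poisson(λ) are independent, q = 1−p. Then for every bounded g : ℕ → ℝ, E[ (n(p/q) + λ/q − (p/q)·M₁)·g(M₁+1) − M₁·g(M₁) + λ(p/q)·(g(M₁+2) − g(M₁+1)) ] = 0. -/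
/-!
Condition on the binomial part `ξ = i`. Writing `G m = E g(m + η)`, the Poisson identity
`E[η h(η)] = λ E[h(η + 1)]` turns the conditional expectation of the operator into
`(p/q)(n - i) G(i + 1) - i G(i)`: the terms in `λ/q` cancel because `λ/q - λ - λp/q = 0`.
What is left is the binomial Stein identity `E[(p/q)(n - ξ) G(ξ + 1) - ξ G(ξ)] = 0`, which
telescopes since the binomial weights satisfy `b(i) (p/q)(n - i) = b(i + 1)(i + 1)`.
Boundedness of `g` makes every Poisson series absolutely summable, and the finite support of
the binomial law lets the outer series be split along the convolution.
-/

open scoped BigOperators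

open Finset

noncomputable def binPoisSteinOp (n : ℕ) (p lam : ℝ) (g : ℕ → ℝ) (k : ℕ) : ℝ :=
  ((n : ℝ) * (p / (1 - p)) + lam / (1 - p) - (p / (1 - p)) * (k : ℝ)) * g (k + 1) -
    (k : ℝ) * g k + lam * (p / (1 - p)) * (g (k + 2) - g (k + 1))

noncomputable def poisSmooth (lam : ℝ) (g : ℕ → ℝ) (m : ℕ) : ℝ :=
  ∑' j, poisPMF lam j * g (m + j)

theorem hasSum_convolution_mul_of_eq_zero {R : Type*} [Ring R] [TopologicalSpace R]
    [IsTopologicalRing R] {a b F T : ℕ → R} {n : ℕ} (ha : ∀ i, n < i → a i = 0)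
    (hT : ∀ i, HasSum (fun j => b j * F (i + j)) (T i)) :
    HasSum (fun k => (∑ i ∈ range (k + 1), a i * b (k - i)) * F k)
      (∑ i ∈ range (n + 1), a i * T i) := by
  have hshift (i : ℕ) :
      HasSum (fun k => if i ≤ k then a i * b (k - i) * F k else 0) (a i * T i) := by
    refine (hasSum_nat_add_iff' i).mp ?_
    have hlow : ∑ k ∈ range i, (if i ≤ k then a i * b (k - i) * F k else 0) = 0 :=
      sum_eq_zero fun k hk => if_neg (by simpa using hk)
    rw [hlow, sub_zero]
    refine ((hT i).mul_left (a i)).congr_fun fun k => ?_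
    rw [if_pos (Nat.le_add_left i k), Nat.add_sub_cancel, add_comm k i, mul_assoc]
  refine (hasSum_sum fun i _ => hshift i).congr_fun fun k => ?_
  rw [sum_mul, ← sum_filter, ← sum_filter_of_ne (p := (· ≤ n))]
  · exact sum_congr (by ext i; simp; omega) fun _ _ => rfl
  · intro i _ hi
    by_contra hin
    exact hi (by rw [ha i (not_le.mp hin), zero_mul, zero_mul])

theorem binPMF_eq_zero_of_lt (n : ℕ) (p : ℝ) {i : ℕ} (hi : n < i) : binPMF n p i = 0 := by
  simp [binPMF, Nat.choose_eq_zero_of_lt hi]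

theorem binPMF_succ_mul (n : ℕ) {p : ℝ} (hq : 1 - p ≠ 0) (i : ℕ) :
    binPMF n p (i + 1) * ((i : ℝ) + 1) = binPMF n p i * (p / (1 - p) * ((n : ℝ) - i)) := by
  rcases lt_or_ge i n with hi | hi
  · have hchoose : (n.choose (i + 1) : ℝ) * ((i : ℝ) + 1) = n.choose i * ((n : ℝ) - i) := by
      have := congrArg (Nat.cast (R := ℝ)) (Nat.choose_succ_right_eq n i)
      push_cast [Nat.cast_sub hi.le] at this
      exact this
    have hpow : (1 - p) ^ (n - i) = (1 - p) ^ (n - (i + 1)) * (1 - p) := by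
      rw [← pow_succ]; congr 1; omega
    unfold binPMF
    rw [hpow]
    linear_combination p ^ (i + 1) * (1 - p) ^ (n - (i + 1)) * hchoose -
      (n.choose i * p ^ (i + 1) * (1 - p) ^ (n - (i + 1)) * ((n : ℝ) - i)) * mul_inv_cancel₀ hq
  · rw [binPMF_eq_zero_of_lt n p (Nat.lt_succ_of_le hi)]
    rcases hi.lt_or_eq with hi | rfl
    · rw [binPMF_eq_zero_of_lt n p hi]; ring
    · ring

theorem sum_binPMF_mul_stein (n : ℕ) {p : ℝ} (hq : 1 - p ≠ 0) (φ : ℕ → ℝ) :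
    ∑ i ∈ range (n + 1),
      binPMF n p i * (p / (1 - p) * ((n : ℝ) - i) * φ (i + 1) - i * φ i) = 0 := by
  have htel (i : ℕ) : binPMF n p i * (p / (1 - p) * ((n : ℝ) - i) * φ (i + 1) - i * φ i) =
      binPMF n p (i + 1) * ((i + 1 : ℕ) * φ (i + 1)) - binPMF n p i * (i * φ i) := by
    rw [← mul_assoc _ _ (φ (i + 1)), mul_sub, ← mul_assoc, ← binPMF_succ_mul n hq]
    push_cast
    ring
  simp_rw [htel, sum_range_sub (fun i => binPMF n p i * (i * φ i)),
    binPMF_eq_zero_of_lt n p (Nat.lt_succ_self n)]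
  simp

theorem poisPMF_succ_mul (lam : ℝ) (j : ℕ) :
    poisPMF lam (j + 1) * ((j : ℝ) + 1) = lam * poisPMF lam j := by
  simp only [poisPMF, Nat.factorial_succ, Nat.cast_mul, pow_succ]
  field_simp
  push_cast
  ring

theorem summable_poisPMF (lam : ℝ) : Summable (poisPMF lam) :=
  ((Real.summable_pow_div_factorial lam).mul_left (Real.exp (-lam))).congr fun j => by
    rw [poisPMF, mul_div_assoc]

theorem summable_poisPMF_mul_of_abs_le {lam C : ℝ} {u : ℕ → ℝ} (hu : ∀ j, |u j| ≤ C) :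
    Summable fun j => poisPMF lam j * u j :=
  .of_norm_bounded ((summable_poisPMF lam).abs.mul_right C) fun j => by
    rw [Real.norm_eq_abs, abs_mul]
    exact mul_le_mul_of_nonneg_left (hu j) (abs_nonneg _)

theorem HasSum.poisPMF_mul_natCast_mul {lam s : ℝ} {h : ℕ → ℝ}
    (hs : HasSum (fun j => poisPMF lam j * h (j + 1)) s) :
    HasSum (fun j => poisPMF lam j * (j * h j)) (lam * s) := by
  refine (hasSum_nat_add_iff' 1).mp ?_
  simp only [sum_range_one, Nat.cast_zero, zero_mul, mul_zero, sub_zero]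
  refine (hs.mul_left lam).congr_fun fun j => ?_
  push_cast
  rw [← mul_assoc, ← mul_assoc lam, ← poisPMF_succ_mul]

theorem hasSum_poisPMF_mul_binPoisSteinOp (n : ℕ) {p lam C : ℝ} (hq : 1 - p ≠ 0)
    {g : ℕ → ℝ} (hg : ∀ k, |g k| ≤ C) (i : ℕ) :
    HasSum (fun j => poisPMF lam j * binPoisSteinOp n p lam g (i + j))
      (p / (1 - p) * ((n : ℝ) - i) * poisSmooth lam g (i + 1) - i * poisSmooth lam g i) := by
  have hG (m : ℕ) : HasSum (fun j => poisPMF lam j * g (m + j)) (poisSmooth lam g m) :=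
    (summable_poisPMF_mul_of_abs_le fun j => hg (m + j)).hasSum
  have hbias (m : ℕ) :
      HasSum (fun j => poisPMF lam j * (j * g (m + j))) (lam * poisSmooth lam g (m + 1)) :=
    ((hG (m + 1)).congr_fun fun j => by rw [add_right_comm, add_assoc]).poisPMF_mul_natCast_mul
  set r := p / (1 - p)
  have H := (((((hG (i + 1)).mul_left (n * r + lam / (1 - p) - r * i)).sub
    ((hbias (i + 1)).mul_left r)).sub ((hG i).mul_left (i : ℝ))).sub (hbias i)).add
    (((hG (i + 2)).sub (hG (i + 1))).mul_left (lam * r))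
  replace H := H.congr_fun (g := fun j => poisPMF lam j * binPoisSteinOp n p lam g (i + j))
    fun j => by
      rw [add_right_comm i 1 j, add_right_comm i 2 j]
      simp only [binPoisSteinOp, Nat.cast_add]
      ring
  have hlam : lam / (1 - p) - lam - lam * r = 0 := by
    simp only [r]
    field_simp
    ring
  -- `H` carries the `AddCommGroup`-derived monoid instance, which `convert` fails to unify.
  refine cast (congrArg (HasSum _) ?_) H
  linear_combination poisSmooth lam g (i + 1) * hlam

theorem stmt_4_general (n : ℕ) (p lam : ℝ) (hp1 : p < 1)
    (g : ℕ → ℝ) (C : ℝ) (hg : ∀ k, |g k| ≤ C) :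
    ∑' k : ℕ,
      binPoisPMF n p lam k *
        (((n : ℝ) * (p / (1 - p)) + lam / (1 - p) - (p / (1 - p)) * (k : ℝ)) * g (k + 1) -
          (k : ℝ) * g k + lam * (p / (1 - p)) * (g (k + 2) - g (k + 1))) = 0 := by
  have hq : 1 - p ≠ 0 := (sub_pos.mpr hp1).ne'
  have H := hasSum_convolution_mul_of_eq_zero (fun _ => binPMF_eq_zero_of_lt n p)
    (hasSum_poisPMF_mul_binPoisSteinOp n (lam := lam) hq hg)
  exact H.tsum_eq.trans (sum_binPMF_mul_stein n hq (poisSmooth lam g))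

/-- Perturbed Stein identity for `M₁ = B(n,p) ∗ Poisson(λ)`: for every bounded `g`,
`E[(n(p/q) + λ/q − (p/q) M₁) g(M₁+1) − M₁ g(M₁) + λ(p/q)(g(M₁+2) − g(M₁+1))] = 0`. -/
theorem stmt_4 (n : ℕ) (p lam : ℝ) (hp0 : 0 < p) (hp1 : p < 1) (hlam : 0 < lam)
    (g : ℕ → ℝ) (C : ℝ) (hg : ∀ k, |g k| ≤ C) :
    ∑' k : ℕ,
      binPoisPMF n p lam k *
        (((n : ℝ) * (p / (1 - p)) + lam / (1 - p) - (p / (1 - p)) * (k : ℝ)) * g (k + 1) -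
          (k : ℝ) * g k + lam * (p / (1 - p)) * (g (k + 2) - g (k + 1))) = 0 :=
  stmt_4_general n p lam hp1 g C hg
end

section
/- For cyclic k-runs with i.i.d. Bernoulli(p) trials, the second factorial cumulant is Γ₂(W) = (N p^k/(1−p)) · [2(p − p^k) − (2k−1) p^k (1−p)]. In particular Γ₂(W) > 0 (i.e. Var W > E W) if and only if 2(p − p^k) > (2k−1) p^k (1−p). -/
/-!
`X_j` is the product of the indicators of the window `{j, …, j + k − 1}`, so by independence
`E[X_i X_j] = p ^ |window i ∪ window j|`. By translation invariance this depends only on the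
cyclic offset `m = j − i`, and since `2k ≤ N` two windows at offset `m` cover
`k + min(k, m, N − m)` points. Summing over the offsets gives a constant block and two
geometric series, so `E[W²]` is explicit and `Γ₂` follows by algebra; its sign is that of the
bracket because `N p^k / (1 − p) > 0`.
-/

open MeasureTheory Finset

lemma ZMod.natCast_injOn_range {N : ℕ} : Set.InjOn (Nat.cast : ℕ → ZMod N) (range N) := by
  intro a ha b hb hab
  simpa [ZMod.val_cast_of_lt (mem_range.mp ha), ZMod.val_cast_of_lt (mem_range.mp hb)]
    using congrArg ZMod.val hab

lemma ZMod.sum_univ_eq_sum_range {M : Type*} [AddCommMonoid M] {N : ℕ} [NeZero N]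
    (f : ZMod N → M) : ∑ d, f d = ∑ m ∈ range N, f m :=
  sum_nbij' ZMod.val Nat.cast (fun d _ => mem_range.mpr d.val_lt) (fun _ _ => mem_univ _)
    (fun d _ => ZMod.natCast_zmod_val d) (fun _ hm => ZMod.val_cast_of_lt (mem_range.mp hm))
    (fun d _ => by rw [ZMod.natCast_zmod_val])

lemma prod_boole_mul_prod_boole {ι M₀ : Type*} [CommMonoidWithZero M₀] [DecidableEq ι]
    (s t : Finset ι) (P : ι → Prop) [DecidablePred P] :
    (∏ a ∈ s, if P a then (1 : M₀) else 0) * (∏ a ∈ t, if P a then (1 : M₀) else 0) =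
      ∏ a ∈ s ∪ t, if P a then (1 : M₀) else 0 := by
  simp only [prod_boole, ite_zero_mul_ite_zero, mul_one, forall_mem_union]

lemma integral_prod_pi_eq_pow {ι α : Type*} [Fintype ι] [MeasurableSpace α] (μ : Measure α)
    [IsProbabilityMeasure μ] (f : α → ℝ) (S : Finset ι) :
    ∫ ω, ∏ a ∈ S, f (ω a) ∂Measure.pi (fun _ => μ) = (∫ x, f x ∂μ) ^ #S := by
  classical
  calc ∫ ω, ∏ a ∈ S, f (ω a) ∂Measure.pi (fun _ => μ)
      = ∫ ω, ∏ a, (if a ∈ S then f (ω a) else 1) ∂Measure.pi (fun _ => μ) := by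
        simp only [Fintype.prod_ite_mem]
    _ = ∏ a, ∫ x, (if a ∈ S then f x else 1) ∂μ :=
        integral_fintype_prod_eq_prod (fun a x => if a ∈ S then f x else 1)
    _ = ∏ a, (if a ∈ S then ∫ x, f x ∂μ else 1) := by
        congr with a
        split_ifs <;> simp
    _ = (∫ x, f x ∂μ) ^ #S := by rw [Fintype.prod_ite_mem, prod_const]

lemma integral_boole_bernoulli (p : NNReal) (h : p ≤ 1) :
    ∫ b, (if b = true then (1 : ℝ) else 0) ∂(PMF.bernoulli p h).toMeasure = p := by
  simp [PMF.integral_eq_sum, PMF.bernoulli_apply]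

namespace CyclicRuns

variable {N k : ℕ}

def window (j : ZMod N) (k : ℕ) : Finset (ZMod N) := (range k).image fun l : ℕ => j + l

lemma image_add_window (i j : ZMod N) (k : ℕ) :
    (window j k).image (i + ·) = window (i + j) k := by
  simp only [window, image_image, Function.comp_def, add_assoc]

lemma injOn_add_natCast (j : ZMod N) (hk : k ≤ N) :
    Set.InjOn (fun l : ℕ => j + (l : ZMod N)) (range k) := fun _ ha _ hb hab =>
  ZMod.natCast_injOn_range (range_subset_range.mpr hk ha) (range_subset_range.mpr hk hb)
    (add_left_cancel hab)

lemma card_window (j : ZMod N) (hk : k ≤ N) : #(window j k) = k := by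
  rw [window, card_image_of_injOn (injOn_add_natCast j hk), card_range]

lemma prod_window {M : Type*} [CommMonoid M] (j : ZMod N) (hk : k ≤ N) (f : ZMod N → M) :
    ∏ a ∈ window j k, f a = ∏ l ∈ range k, f (j + l) :=
  prod_image (injOn_add_natCast j hk)

lemma window_union_window_add {m : ℕ} (j : ZMod N) (hm : m ≤ k) :
    window j k ∪ window (j + m) k = window j (m + k) := by
  ext a
  simp only [window, mem_union, mem_image, mem_range]
  constructor
  · rintro (⟨l, hl, rfl⟩ | ⟨l, hl, rfl⟩)
    · exact ⟨l, by omega, rfl⟩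
    · exact ⟨m + l, by omega, by push_cast; ring⟩
  · rintro ⟨l, hl, rfl⟩
    by_cases hlk : l < k
    · exact Or.inl ⟨l, hlk, rfl⟩
    · exact Or.inr ⟨l - m, by omega, by rw [Nat.cast_sub (by omega)]; ring⟩

lemma disjoint_window_window_add {m : ℕ} (j : ZMod N) (hkm : k ≤ m) (hmN : m + k ≤ N) :
    Disjoint (window j k) (window (j + m) k) := by
  simp only [window, disjoint_left, mem_image, mem_range, not_exists, not_and]
  rintro _ ⟨l, hl, rfl⟩ l' hl' h
  rw [add_assoc, add_right_inj, ← Nat.cast_add] at h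
  have := ZMod.natCast_injOn_range (mem_range.mpr (by omega)) (mem_range.mpr (by omega)) h
  omega

lemma card_window_union_window_sub (i j : ZMod N) :
    #(window i k ∪ window j k) = #(window 0 k ∪ window (j - i) k) := by
  rw [← card_image_of_injective _ (add_right_injective (-i)), image_union, image_add_window,
    image_add_window, neg_add_cancel, neg_add_eq_sub]

lemma card_window_union_window (hN : 2 * k ≤ N) {m : ℕ} (hm : m < N) :
    #(window 0 k ∪ window (m : ZMod N) k) = k + min k (min m (N - m)) := by
  rcases le_total m k with hmk | hkm
  · rw [← zero_add (m : ZMod N), window_union_window_add 0 hmk, card_window 0 (by omega)]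
    omega
  rcases le_total (m + k) N with hmkN | hNmk
  · rw [← zero_add (m : ZMod N), card_union_of_disjoint
      (disjoint_window_window_add 0 hkm hmkN), card_window _ (by omega), card_window _ (by omega)]
    omega
  · have hneg : (m : ZMod N) = -((N - m : ℕ) : ZMod N) := by
      rw [Nat.cast_sub hm.le, ZMod.natCast_self, neg_sub, sub_zero]
    rw [hneg, union_comm, card_window_union_window_sub, zero_sub, neg_neg,
      ← zero_add ((N - m : ℕ) : ZMod N), window_union_window_add 0 (by omega),
      card_window 0 (by omega)]
    omega

lemma sum_range_pow_add_min_sub {p : ℝ} (hp : p ≠ 1) (hk : 1 ≤ k) (hN : 2 * k ≤ N) :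
    ∑ m ∈ range N, p ^ (k + min k (min m (N - m))) =
      p ^ k * (1 + p - 2 * p ^ k) / (1 - p) + (N + 1 - 2 * k) * p ^ (2 * k) := by
  have near : ∑ m ∈ range k, p ^ (k + min k (min m (N - m))) =
      p ^ k * ((p ^ k - 1) / (p - 1)) := by
    rw [← geom_sum_eq hp, mul_sum]
    refine sum_congr rfl fun m hm => ?_
    have := mem_range.mp hm
    rw [← pow_add]
    congr 1
    omega
  have middle : ∑ m ∈ Ico k (N - k + 1), p ^ (k + min k (min m (N - m))) =
      (N + 1 - 2 * k) * p ^ (2 * k) := by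
    have hconst : ∀ m ∈ Ico k (N - k + 1), p ^ (k + min k (min m (N - m))) = p ^ (2 * k) :=
      fun m hm => by
        have := mem_Ico.mp hm
        congr 1
        omega
    rw [sum_congr rfl hconst, sum_const, Nat.card_Ico, nsmul_eq_mul,
      show N - k + 1 - k = N + 1 - 2 * k by omega, Nat.cast_sub (by omega)]
    push_cast
    ring
  have far : ∑ m ∈ Ico (N - k + 1) N, p ^ (k + min k (min m (N - m))) =
      p ^ k * ((p ^ k - p) / (p - 1)) := by
    have reflect := sum_Ico_reflect (fun e => p ^ k * p ^ e) (N - k + 1) (n := N) le_self_add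
    rw [show N + 1 - N = 1 by omega, show N + 1 - (N - k + 1) = k by omega] at reflect
    have geom := geom_sum_Ico hp hk
    rw [pow_one] at geom
    rw [← geom, mul_sum, ← reflect]
    refine sum_congr rfl fun m hm => ?_
    have := mem_Ico.mp hm
    rw [← pow_add]
    congr 1
    omega
  rw [range_eq_Ico,
    ← sum_Ico_consecutive _ (by omega : 0 ≤ N - k + 1) (by omega : N - k + 1 ≤ N),
    ← sum_Ico_consecutive _ (by omega : 0 ≤ k) (by omega : k ≤ N - k + 1),
    ← range_eq_Ico, near, middle, far]
  have : 1 - p ≠ 0 := sub_ne_zero.mpr hp.symm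
  field_simp
  ring

lemma sum_sum_pow_card_window_union {p : ℝ} [NeZero N] (hN : 2 * k ≤ N) :
    ∑ i : ZMod N, ∑ j, p ^ #(window i k ∪ window j k) =
      N * ∑ m ∈ range N, p ^ (k + min k (min m (N - m))) := by
  calc ∑ i : ZMod N, ∑ j, p ^ #(window i k ∪ window j k)
      = ∑ i : ZMod N, ∑ j, p ^ #(window 0 k ∪ window (j - i) k) :=
        sum_congr rfl fun i _ => sum_congr rfl fun j _ => by rw [card_window_union_window_sub]
    _ = ∑ _i : ZMod N, ∑ d, p ^ #(window 0 k ∪ window d k) :=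
        sum_congr rfl fun i _ => Fintype.sum_equiv (Equiv.subRight i) _ _ fun _ => rfl
    _ = N * ∑ m ∈ range N, p ^ (k + min k (min m (N - m))) := by
        rw [sum_const, card_univ, ZMod.card, nsmul_eq_mul, ZMod.sum_univ_eq_sum_range]
        congr 1
        exact sum_congr rfl fun m hm => by rw [card_window_union_window hN (mem_range.mp hm)]

end CyclicRuns

open CyclicRuns

/-- Second factorial cumulant of the number of cyclic `k`-runs: with `ξ_i` i.i.d.
Bernoulli(`p`), `X_j = ξ_j ⋯ ξ_{j+k−1}` (indices mod `N`) and `W = Σ_j X_j`,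
`Γ₂(W) = Var W − E W = (N p^k/(1−p)) [2(p − p^k) − (2k−1) p^k (1−p)]`; in particular
`Var W > E W` if and only if `2(p − p^k) > (2k−1) p^k (1−p)`. -/
theorem stmt_17 (N k : ℕ) [NeZero N] (hk : 1 ≤ k) (hN : 2 * k ≤ N)
    (p : ℝ) (hp0 : 0 < p) (hp1 : p < 1) (hp' : ENNReal.ofReal p ≤ 1) :
    let P : Measure (ZMod N → Bool) :=
      Measure.pi fun _ => (PMF.bernoulli (Real.toNNReal p) (ENNReal.coe_le_one_iff.mp hp')).toMeasure
    let X : ZMod N → (ZMod N → Bool) → ℝ := fun j ω =>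
      ∏ l ∈ Finset.range k, (if ω (j + (l : ZMod N)) = true then (1 : ℝ) else 0)
    let W : (ZMod N → Bool) → ℝ := fun ω => ∑ j : ZMod N, X j ω
    let EW := ∫ ω, W ω ∂P
    let varW := (∫ ω, (W ω) ^ 2 ∂P) - EW ^ 2
    varW - EW = (N * p ^ k / (1 - p)) * (2 * (p - p ^ k) - (2 * k - 1) * p ^ k * (1 - p)) ∧
    (EW < varW ↔ (2 * k - 1) * p ^ k * (1 - p) < 2 * (p - p ^ k)) := by
  intro P X W EW varW
  classical
  have hkN : k ≤ N := by omega
  have hX (j : ZMod N) (ω : ZMod N → Bool) :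
      X j ω = ∏ a ∈ window j k, (if ω a = true then (1 : ℝ) else 0) :=
    (prod_window j hkN fun a => if ω a = true then (1 : ℝ) else 0).symm
  have hmoment (S : Finset (ZMod N)) :
      ∫ ω, ∏ a ∈ S, (if ω a = true then (1 : ℝ) else 0) ∂P = p ^ #S := by
    rw [integral_prod_pi_eq_pow _ (fun b => if b = true then (1 : ℝ) else 0),
      integral_boole_bernoulli, Real.coe_toNNReal _ hp0.le]
  have hEW : EW = N * p ^ k := by
    simp only [EW, W, integral_finsetSum _ fun _ _ => Integrable.of_finite, hX, hmoment,
      card_window _ hkN, sum_const, card_univ, ZMod.card, nsmul_eq_mul]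
  have hEW2 : ∫ ω, W ω ^ 2 ∂P = N * ∑ m ∈ range N, p ^ (k + min k (min m (N - m))) := by
    simp only [W, sq, sum_mul_sum, integral_finsetSum _ fun _ _ => Integrable.of_finite, hX,
      prod_boole_mul_prod_boole, hmoment]
    exact sum_sum_pow_card_window_union hN
  have hΓ : varW - EW =
      (N * p ^ k / (1 - p)) * (2 * (p - p ^ k) - (2 * k - 1) * p ^ k * (1 - p)) := by
    have : 1 - p ≠ 0 := by linarith
    simp only [varW, hEW2, hEW, sum_range_pow_add_min_sub hp1.ne hk hN]
    field_simp
    ring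
  have hscale : 0 < N * p ^ k / (1 - p) := by
    have : 0 < (N : ℝ) := by exact_mod_cast Nat.pos_of_ne_zero (NeZero.ne N)
    have : 0 < 1 - p := by linarith
    positivity
  refine ⟨hΓ, ?_⟩
  rw [← sub_pos, hΓ, mul_pos_iff_of_pos_left hscale, sub_pos]
end
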